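/- arXiv:1609.01247 — 7 statements merged into one kernel-verified Lean document; each statement's English description precedes it below -/
import Mathlib

section
/- Let k ≥ 1 and set d = 3k+2. Then for every n ≥ d there exists a coloring of the 2-dimensional faces of the hypercube Q_n with exactly (k²+k+1)(k+2) colors that is d-polychromatic, i.e., every embedded d-dimensional subcube of Q_n contains a 2-face of every color. -/
/-- A `j`-dimensional face of the hypercube `Q_n`: a set `S` of `j` free coordinates
together with an assignment of bits to the coordinates outside `S`. -/
structure Face (n j : ℕ) where
  S : Finset (Fin n)
  hcard : S.card = j
  f : ∀ i : Fin n, i ∉ S → Bool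

/-- The face `G` lies in the face `F`: the free coordinates of `G` are among those
of `F`, and the fixed bits agree outside the free coordinates of `F`. -/
def LiesIn {n ℓ d : ℕ} (G : Face n ℓ) (F : Face n d) : Prop :=
  ∃ h : G.S ⊆ F.S, ∀ (i : Fin n) (hi : i ∉ F.S), G.f i (fun hG => hi (h hG)) = F.f i hi

/-- A coloring `χ` of the `ℓ`-faces of `Q_n` is `d`-polychromatic if every `d`-face
contains an `ℓ`-face of every color. -/
def Polychromatic {n ℓ : ℕ} (d : ℕ) {C : Type*} (χ : Face n ℓ → C) : Prop :=
  ∀ (F : Face n d) (c : C), ∃ G : Face n ℓ, LiesIn G F ∧ χ G = c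

/-!
Color a 2-face whose free coordinates are `i < j` by `(v + (k + 1) w, u + v + w)` modulo
`(k² + k + 1, k + 2)`, where `u`, `v`, `w` count its fixed ones below `i`, between `i` and `j`,
and above `j`. Inside a `(3k + 2)`-face with free coordinates `t₀ < ⋯ < t₃ₖ₊₁`, take `i = t_p`,
`j = t_q` and set `s₁`, `s₂`, `s₃` of the other free coordinates to one below `t_p`, between, and
above `t_q`: this adds `s₂ + (k + 1) s₃` and `s₁ + s₂ + s₃` to the two components. For
`(p, q) ∈ {k, k + 1} × {2k + 1, 2k + 2}` the four targets `x_{p,q}` for `s₂ + (k + 1) s₃` satisfy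
`x_{k,2k+1} + x_{k+1,2k+2} = x_{k+1,2k+1} + x_{k,2k+2}`, and an analysis of base-`(k + 1)` digits
shows that one of the four choices always reaches the prescribed color.
-/

open Finset

lemma card_filter_lt_union_map {α β : Type*} [LinearOrder α] [LinearOrder β] (O : Finset β)
    (t : α ↪o β) {Y : Finset α} (hY : ∀ y ∈ Y, t y ∉ O) (i : α) :
    #{b ∈ O ∪ Y.map t.toEmbedding | b < t i} = #{b ∈ O | b < t i} + #{y ∈ Y | y < i} := by
  rw [filter_union, card_union_of_disjoint, filter_map, card_map]
  · simp
  · refine disjoint_filter_filter <| disjoint_left.2 fun b hb hbY => ?_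
    obtain ⟨y, hy, rfl⟩ := mem_map.1 hbY
    exact hY y hy hb

lemma exists_finset_card_filter_lt {d : ℕ} {p q : Fin d} {s₁ s₂ s₃ : ℕ} (h₁ : s₁ ≤ p)
    (h₂ : p + s₂ < q) (h₃ : q + s₃ < d) :
    ∃ Y : Finset (Fin d), p ∉ Y ∧ q ∉ Y ∧ #{y ∈ Y | y < p} = s₁ ∧
      #{y ∈ Y | y < q} = s₁ + s₂ ∧ #Y = s₁ + s₂ + s₃ := by
  obtain ⟨Y₁, hY₁, rfl⟩ := exists_subset_card_eq (s := Iio p) (n := s₁) (by rwa [Fin.card_Iio])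
  obtain ⟨Y₂, hY₂, rfl⟩ := exists_subset_card_eq (s := Ioo p q) (n := s₂)
    (by rw [Fin.card_Ioo]; omega)
  obtain ⟨Y₃, hY₃, rfl⟩ := exists_subset_card_eq (s := Ioi q) (n := s₃)
    (by rw [Fin.card_Ioi]; omega)
  have m₁ : ∀ y ∈ Y₁, y < p := fun y hy => mem_Iio.1 (hY₁ hy)
  have m₂ : ∀ y ∈ Y₂, p < y ∧ y < q := fun y hy => mem_Ioo.1 (hY₂ hy)
  have m₃ : ∀ y ∈ Y₃, q < y := fun y hy => mem_Ioi.1 (hY₃ hy)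
  have d₁₂ : Disjoint Y₁ Y₂ := disjoint_left.2 fun y h h' => by grind
  have d₁₂₃ : Disjoint (Y₁ ∪ Y₂) Y₃ := disjoint_left.2 fun y h h' => by grind
  refine ⟨Y₁ ∪ Y₂ ∪ Y₃, by grind, by grind, ?_, ?_, ?_⟩
  · rw [filter_union, filter_union, filter_true_of_mem m₁, filter_false_of_mem,
      filter_false_of_mem, union_empty, union_empty] <;> grind
  · rw [filter_union, filter_true_of_mem, filter_false_of_mem, union_empty,
      card_union_of_disjoint d₁₂] <;> grind
  · rw [card_union_of_disjoint d₁₂₃, card_union_of_disjoint d₁₂]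

lemma Polychromatic.comp {n ℓ d : ℕ} {C C' : Type*} {χ : Face n ℓ → C} (h : Polychromatic d χ)
    {e : C → C'} (he : Function.Surjective e) : Polychromatic d (e ∘ χ) := by
  intro F c
  obtain ⟨c, rfl⟩ := he c
  obtain ⟨G, hGF, rfl⟩ := h F c
  exact ⟨G, hGF, rfl⟩

lemma Polychromatic.surjective {n ℓ d : ℕ} {C : Type*} {χ : Face n ℓ → C}
    (h : Polychromatic d χ) (hd : d ≤ n) : Function.Surjective χ := by
  intro c
  obtain ⟨S, -, hS⟩ := exists_subset_card_eq (s := (univ : Finset (Fin n))) (n := d)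
    (by simpa using hd)
  obtain ⟨G, -, hG⟩ := h ⟨S, hS, fun _ _ => false⟩ c
  exact ⟨G, hG⟩

section Arithmetic

variable {k : ℕ}

lemma ZMod.sq_add_add_one_eq_zero : (k : ZMod (k ^ 2 + k + 1)) ^ 2 + k + 1 = 0 := by
  exact_mod_cast ZMod.natCast_self (k ^ 2 + k + 1)

lemma ZMod.add_two_eq_zero : (k : ZMod (k + 2)) + 2 = 0 := by
  exact_mod_cast ZMod.natCast_self (k + 2)

lemma ZMod.exists_digits (x : ZMod (k ^ 2 + k + 1)) :
    ∃ r j : ℕ, r ≤ k ∧ r + (k + 1) * j < k ^ 2 + k + 1 ∧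
      (r + (k + 1) * j : ZMod (k ^ 2 + k + 1)) = x := by
  refine ⟨x.val % (k + 1), x.val / (k + 1), Nat.lt_succ_iff.mp (Nat.mod_lt _ k.succ_pos),
    (Nat.mod_add_div _ _).symm ▸ ZMod.val_lt x, ?_⟩
  exact_mod_cast (congrArg (Nat.cast : ℕ → ZMod _) (Nat.mod_add_div x.val (k + 1))).trans
    (ZMod.natCast_zmod_val x)

/-- `s₁`, `s₂`, `s₃` are the numbers of free coordinates of a `d`-face set to one below its
`p`-th free coordinate, between its `p`-th and `q`-th, and above its `q`-th; `x` and `t` are the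
increments of the two color components they have to produce. -/
def Splittable (k d p q : ℕ) (x : ZMod (k ^ 2 + k + 1)) (t : ZMod (k + 2)) : Prop :=
  ∃ s₁ s₂ s₃ : ℕ, s₁ ≤ p ∧ p + s₂ < q ∧ q + s₃ < d ∧
    (s₂ + (k + 1) * s₃ : ZMod (k ^ 2 + k + 1)) = x ∧ (s₁ + s₂ + s₃ : ZMod (k + 2)) = t

lemma Splittable.of_le {d p q s₂ s₃ : ℕ} {x : ZMod (k ^ 2 + k + 1)} (t : ZMod (k + 2))
    (hp : k + 1 ≤ p) (h₂ : p + s₂ < q) (h₃ : q + s₃ < d)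
    (hx : (s₂ + (k + 1) * s₃ : ZMod (k ^ 2 + k + 1)) = x) : Splittable k d p q x t := by
  refine ⟨(t - (s₂ + s₃ : ZMod (k + 2))).val, s₂, s₃, ?_, h₂, h₃, hx, ?_⟩
  · have := ZMod.val_lt (t - (s₂ + s₃ : ZMod (k + 2)))
    omega
  · rw [ZMod.natCast_zmod_val]
    ring

theorem splittable_of_add_eq_add (hk : 1 ≤ k) {xA xB xC xD : ZMod (k ^ 2 + k + 1)}
    (h : xA + xC = xB + xD) (t : ZMod (k + 2)) :
    Splittable k (3 * k + 2) k (2 * k + 1) xA t ∨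
      Splittable k (3 * k + 2) (k + 1) (2 * k + 1) xB t ∨
      Splittable k (3 * k + 2) (k + 1) (2 * k + 2) xC t ∨
      Splittable k (3 * k + 2) k (2 * k + 2) xD t := by
  have hM := ZMod.sq_add_add_one_eq_zero (k := k)
  have hN := ZMod.add_two_eq_zero (k := k)
  obtain ⟨c₂, c₃, hc₂, hcM, rfl⟩ := ZMod.exists_digits xC
  by_cases hc₃ : c₃ < k
  · exact Or.inr <| Or.inr <| Or.inl <| .of_le t le_rfl (by omega) (by omega) rfl
  obtain ⟨rfl, hc₃k⟩ : c₂ = 0 ∧ c₃ = k := by constructor <;> nlinarith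
  subst c₃
  obtain ⟨b₂, j, hb₂, hbM, rfl⟩ := ZMod.exists_digits xB
  by_cases hb₂k : b₂ < k
  · have : j ≤ k := by nlinarith
    exact Or.inr <| Or.inl <| .of_le t le_rfl (by omega) (by omega) rfl
  obtain hb₂k : b₂ = k := by omega
  subst b₂
  have hj : j < k := by nlinarith
  obtain ⟨a₂, a₃, ha₂, haM, rfl⟩ := ZMod.exists_digits xA
  have ha₃ : a₃ ≤ k := by nlinarith
  by_cases hs₁ : (t - (a₂ + a₃ : ZMod (k + 2))).val ≤ k
  · refine Or.inl ⟨_, a₂, a₃, hs₁, by omega, by omega, rfl, ?_⟩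
    rw [ZMod.natCast_zmod_val]
    ring
  have ht : t = a₂ + a₃ - 1 := by
    have hval : (t - (a₂ + a₃ : ZMod (k + 2))).val = k + 1 := by
      have := ZMod.val_lt (t - (a₂ + a₃ : ZMod (k + 2)))
      omega
    have := ZMod.natCast_zmod_val (t - (a₂ + a₃ : ZMod (k + 2)))
    rw [hval] at this
    push_cast at this
    linear_combination -this + hN
  -- Here `xD = xA - (k + 1) (j + 1)`: lower the high digit `a₃` of `xA` by `j + 1`,
  -- borrowing from the modulus `(k + 1) k + 1` when `a₃ ≤ j`.
  refine Or.inr <| Or.inr <| Or.inr ?_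
  rcases lt_or_ge j a₃ with hja | haj
  · obtain ⟨m, rfl⟩ := Nat.exists_eq_add_of_lt hja
    refine ⟨j, a₂, m, by omega, by omega, by omega, ?_, ?_⟩
    · push_cast at h
      linear_combination h - hM
    · push_cast at ht
      linear_combination -ht
  · obtain ⟨m, rfl⟩ := Nat.exists_eq_add_of_le haj
    obtain ⟨r, hr⟩ : ∃ r, k = m + r + 1 := ⟨k - m - 1, by omega⟩
    have hrM : (k : ZMod (k ^ 2 + k + 1)) = m + r + 1 := by exact_mod_cast congrArg Nat.cast hr
    have hrN : (k : ZMod (k + 2)) = m + r + 1 := by exact_mod_cast congrArg Nat.cast hr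
    refine ⟨a₃ + m + 1, a₂ + 1, r, by omega, by omega, by omega, ?_, ?_⟩
    · push_cast at h ⊢
      linear_combination h - (k + 1 : ZMod (k ^ 2 + k + 1)) * hrM
    · push_cast
      linear_combination -ht + hN - hrN

end Arithmetic

namespace Face

variable {n j d : ℕ}

def bit (G : Face n j) (l : Fin n) : Bool :=
  if h : l ∈ G.S then false else G.f l h

def ones (G : Face n j) : Finset (Fin n) := {l | G.bit l}

lemma mem_ones {G : Face n j} {l : Fin n} : l ∈ G.ones ↔ ∃ h : l ∉ G.S, G.f l h := by
  by_cases h : l ∈ G.S <;> simp [ones, bit, h]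

lemma disjoint_ones_S (G : Face n j) : Disjoint G.ones G.S :=
  disjoint_left.2 fun _ hl => (mem_ones.1 hl).1

def subface (F : Face n d) (S : Finset (Fin n)) (hS : S.card = j) (X : Finset (Fin n)) :
    Face n j :=
  ⟨S, hS, fun l _ => if h : l ∈ F.S then decide (l ∈ X) else F.f l h⟩

lemma liesIn_subface {F : Face n d} {S : Finset (Fin n)} (hS : S.card = j) (X : Finset (Fin n))
    (hSF : S ⊆ F.S) : LiesIn (F.subface S hS X) F :=
  ⟨hSF, fun _ hi => dif_neg hi⟩

lemma ones_subface {F : Face n d} {S X : Finset (Fin n)} (hS : S.card = j) (hSF : S ⊆ F.S)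
    (hX : X ⊆ F.S \ S) : (F.subface S hS X).ones = F.ones ∪ X := by
  ext l
  have hlX := @hX l
  rw [mem_union, mem_ones, mem_ones]
  by_cases hl : l ∈ F.S <;> simp only [subface, hl, mem_sdiff] at hlX ⊢ <;> grind

def coord (F : Face n d) : Fin d ↪o Fin n := F.S.orderEmbOfFin F.hcard

lemma coord_mem (F : Face n d) (i : Fin d) : F.coord i ∈ F.S :=
  F.S.orderEmbOfFin_mem F.hcard i

def onesBelow (F : Face n d) (i : Fin d) : ℕ := #{l ∈ F.ones | l < F.coord i}

lemma exists_liesIn_ones_eq (F : Face n d) {p q : Fin d} (hpq : p < q) {Y : Finset (Fin d)}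
    (hp : p ∉ Y) (hq : q ∉ Y) :
    ∃ G : Face n 2, LiesIn G F ∧ #G.ones = #F.ones + #Y ∧
      #{l ∈ G.ones | ∃ s ∈ G.S, l < s} = F.onesBelow q + #{y ∈ Y | y < q} ∧
      #{l ∈ G.ones | ∀ s ∈ G.S, l < s} = F.onesBelow p + #{y ∈ Y | y < p} := by
  have hlt : F.coord p < F.coord q := F.coord.strictMono hpq
  have hS : ({F.coord p, F.coord q} : Finset (Fin n)) ⊆ F.S := by
    simp [insert_subset_iff, coord_mem]
  have hX : Y.map F.coord.toEmbedding ⊆ F.S \ {F.coord p, F.coord q} := by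
    intro l hl
    obtain ⟨y, hy, rfl⟩ := mem_map.1 hl
    simp [coord_mem, F.coord.injective.ne (ne_of_mem_of_not_mem hy hp),
      F.coord.injective.ne (ne_of_mem_of_not_mem hy hq)]
  have hY : ∀ y ∈ Y, F.coord y ∉ F.ones := fun y _ h =>
    disjoint_left.1 F.disjoint_ones_S h (F.coord_mem y)
  refine ⟨F.subface _ (card_pair hlt.ne) (Y.map F.coord.toEmbedding),
    liesIn_subface _ _ hS, ?_, ?_, ?_⟩ <;> rw [ones_subface _ hS hX]
  · rw [card_union_of_disjoint, card_map]
    refine disjoint_left.2 fun l hl hlY => ?_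
    obtain ⟨y, hy, rfl⟩ := mem_map.1 hlY
    exact hY y hy hl
  all_goals
    rw [onesBelow, ← card_filter_lt_union_map _ _ hY]
    congr 1
    refine filter_congr fun l _ => ?_
    simp only [subface, mem_insert, mem_singleton, exists_eq_or_imp, forall_eq_or_imp,
      exists_eq_left, forall_eq]
    grind

-- With `u`, `v`, `w` the numbers of ones below, between and above the two free coordinates,
-- this is `(v + (k + 1) w, u + v + w)`: the filters count `u + v` and `u`.
def color (k : ℕ) (G : Face n 2) : ZMod (k ^ 2 + k + 1) × ZMod (k + 2) :=
  ((k + 1) * #G.ones - k * #{l ∈ G.ones | ∃ s ∈ G.S, l < s} - #{l ∈ G.ones | ∀ s ∈ G.S, l < s},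
    #G.ones)

lemma exists_liesIn_color_eq {k : ℕ} (F : Face n d) (p q : Fin d) (hpq : p < q)
    (ρ : ZMod (k ^ 2 + k + 1)) (τ : ZMod (k + 2))
    (h : Splittable k d p q
      (ρ - ((k + 1) * #F.ones - k * F.onesBelow q - F.onesBelow p : ZMod (k ^ 2 + k + 1)))
      (τ - (#F.ones : ZMod (k + 2)))) :
    ∃ G : Face n 2, LiesIn G F ∧ color k G = (ρ, τ) := by
  obtain ⟨s₁, s₂, s₃, h₁, h₂, h₃, hx, ht⟩ := h
  obtain ⟨Y, hp, hq, hYp, hYq, hY⟩ := exists_finset_card_filter_lt h₁ h₂ h₃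
  obtain ⟨G, hGF, hG, hGq, hGp⟩ := F.exists_liesIn_ones_eq hpq hp hq
  refine ⟨G, hGF, Prod.ext ?_ ?_⟩ <;> simp only [color, hG, hGq, hGp, hYp, hYq, hY] <;> push_cast
  · linear_combination hx
  · linear_combination ht

theorem polychromatic_color {k : ℕ} (hk : 1 ≤ k) :
    Polychromatic (3 * k + 2) (color (n := n) k) := by
  rintro F ⟨ρ, τ⟩
  let x (p q : Fin (3 * k + 2)) : ZMod (k ^ 2 + k + 1) :=
    ρ - ((k + 1) * #F.ones - k * F.onesBelow q - F.onesBelow p : ZMod (k ^ 2 + k + 1))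
  have hx : x ⟨k, by omega⟩ ⟨2 * k + 1, by omega⟩ + x ⟨k + 1, by omega⟩ ⟨2 * k + 2, by omega⟩ =
      x ⟨k + 1, by omega⟩ ⟨2 * k + 1, by omega⟩ + x ⟨k, by omega⟩ ⟨2 * k + 2, by omega⟩ := by
    ring
  rcases splittable_of_add_eq_add hk hx (τ - #F.ones) with h | h | h | h <;>
    exact F.exists_liesIn_color_eq _ _ (Fin.mk_lt_mk.2 (by omega)) ρ τ h

end Face

theorem statement2 (k : ℕ) (hk : 1 ≤ k) (n : ℕ) (hn : 3 * k + 2 ≤ n) :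
    ∃ χ : Face n 2 → Fin ((k ^ 2 + k + 1) * (k + 2)),
      Function.Surjective χ ∧ Polychromatic (3 * k + 2) χ := by
  let e : ZMod (k ^ 2 + k + 1) × ZMod (k + 2) ≃ Fin ((k ^ 2 + k + 1) * (k + 2)) :=
    ((ZMod.finEquiv _).toEquiv.prodCongr (ZMod.finEquiv _).toEquiv).symm.trans finProdFinEquiv
  have h := (Face.polychromatic_color (n := n) hk).comp e.surjective
  exact ⟨_, h.surjective hn, h⟩
end

section
/- Let t ≥ 2 and n > t be integers, set m = t²+1 and d = 2t+n−1. Define χ : ℕ³ → (ZMod m) × (ZMod n) by χ(p,q,r) = (p − t·q mod m, p + q + r mod n). Then χ is a d-polychromatic simple Q_2-coloring with m·n colors (χ is surjective and d-polychromatic). -/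
/-!
Write `S s = a 0 + ⋯ + a (s-1)`. A subface with stars at `s₁ < s₂` and `x, y, z` bits set in its
three blocks has colour `(x - t y + (1+t) S s₁ - t S s₂, x + y + z + S (d+1))`. We only use
`s₁ ∈ {t, t+1}` and `s₂ ∈ {2t, 2t+1}`; the residues `x - t y` with `x < t, y < t` are the `t²`
consecutive integers `-t² + t, …, t - 1`, so modulo `t² + 1` only `t` is missed, and for `s₂ = 2t`
the last block is long enough for `z` to reach every residue mod `n`. When `(s₁, s₂) = (t, 2t)`
misses the first coordinate, either `(t+1, 2t)` hits it, or moving `s₁` to `t+1` shifts the target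
by some `j ∈ [1, t]`. Then both `(t, 2t+1)` and `(t+1, 2t+1)` hit the first coordinate, with
values of `x + y` that differ by `j` or `t + 1 - j`, hence differ mod `n > t`; since `z` now
misses only one residue mod `n`, one of the two subfaces has the required colour.
-/

/-- A simple `Q_ℓ`-coloring `χ : ℕ^{ℓ+1} → C` is `d`-polychromatic if for every
embedded `Q_d`, encoded by region counts `a_0, …, a_d` (given by `a : ℕ → ℕ`; only
the first `d+1` values are used), and every color `c`, some `Q_ℓ`-subface receives
color `c`.  A subface is given by selected star positions `0 < s 1 < ⋯ < s ℓ < d+1`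
(with conventions `s 0 = 0`, `s (ℓ+1) = d+1`) and bits `ε k ∈ {0,1}` for the
unselected stars; its tuple is `p j = ∑_{s j ≤ i < s (j+1)} a i + ∑_{s j < k < s (j+1)} ε k`. -/
def PolyColoring (ℓ d : ℕ) {C : Type*} (χ : (Fin (ℓ + 1) → ℕ) → C) : Prop :=
  ∀ a : ℕ → ℕ, ∀ c : C, ∃ s : ℕ → ℕ, ∃ ε : ℕ → ℕ,
    s 0 = 0 ∧ s (ℓ + 1) = d + 1 ∧ (∀ j, j ≤ ℓ → s j < s (j + 1)) ∧ (∀ k, ε k ≤ 1) ∧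
    χ (fun j => (∑ i ∈ Finset.Ico (s j.1) (s (j.1 + 1)), a i) +
                (∑ k ∈ Finset.Ioo (s j.1) (s (j.1 + 1)), ε k)) = c

open Finset

theorem sum_Ioo_ite_eq {p : ℕ → Prop} [DecidablePred p] {A B C : ℕ} (hC : A + C < B)
    (h : ∀ k, A < k → k < B → (p k ↔ k ≤ A + C)) :
    ∑ k ∈ Ioo A B, (if p k then 1 else 0) = C := by
  have hfilter : (Ioo A B).filter p = Ioc A (A + C) := by
    ext k
    simp only [mem_filter, mem_Ioo, mem_Ioc]
    constructor
    · rintro ⟨⟨hA, hB⟩, hp⟩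
      exact ⟨hA, (h k hA hB).1 hp⟩
    · rintro ⟨hA, hk⟩
      exact ⟨⟨hA, by omega⟩, (h k hA (by omega)).2 hk⟩
  rw [sum_boole, hfilter, Nat.card_Ioc, Nat.cast_id, Nat.add_sub_cancel_left]

theorem polyColoring_two_of_exists {C : Type*} {d : ℕ} {χ : (Fin 3 → ℕ) → C}
    (h : ∀ (a : ℕ → ℕ) (c : C), ∃ s₁ s₂ x y z : ℕ, x < s₁ ∧ s₁ + y < s₂ ∧ s₂ + z < d + 1 ∧
      χ ![(∑ i ∈ range s₁, a i) + x, (∑ i ∈ Ico s₁ s₂, a i) + y,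
        (∑ i ∈ Ico s₂ (d + 1), a i) + z] = c) :
    PolyColoring 2 d χ := by
  intro a c
  obtain ⟨s₁, s₂, x, y, z, hx, hy, hz, hχ⟩ := h a c
  refine ⟨fun k => if k = 0 then 0 else if k = 1 then s₁ else if k = 2 then s₂ else d + 1,
    fun k => if k ≤ x ∨ (s₁ < k ∧ k ≤ s₁ + y) ∨ (s₂ < k ∧ k ≤ s₂ + z) then 1 else 0,
    rfl, rfl, ?_, fun k => by dsimp only; split <;> omega, ?_⟩
  · intro j hj
    interval_cases j <;> simp <;> omega
  · convert hχ using 2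
    ext j
    fin_cases j <;> simp only [range_eq_Ico, ↓reduceIte, Nat.reduceAdd, Nat.reduceEqDiff] <;>
      congr 1 <;> exact sum_Ioo_ite_eq (by omega) (fun k _ _ => by omega)

section FirstCoordinate

variable {t : ℕ}

theorem exists_lt_add_eq_mul (ht : 0 < t) (w : ℕ) : ∃ x y, x < t ∧ x + w = t * y := by
  have hdiv := Nat.div_add_mod (w + t - 1) t
  have hmod := Nat.mod_lt (w + t - 1) ht
  exact ⟨t - 1 - (w + t - 1) % t, (w + t - 1) / t, by omega, by omega⟩

theorem natCast_sub_mul_eq_of_add_eq {x y : ℕ} {v : ZMod (t ^ 2 + 1)}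
    (h : x + (t ^ 2 + 1 - v.val) = t * y) : (x - t * y : ZMod (t ^ 2 + 1)) = v := by
  have hv := ZMod.val_lt v
  have hcast := congrArg (Nat.cast : ℕ → ZMod (t ^ 2 + 1))
    (show x + (t ^ 2 + 1) = t * y + v.val by omega)
  have hm : (t : ZMod (t ^ 2 + 1)) ^ 2 + 1 = 0 := by exact_mod_cast ZMod.natCast_self (t ^ 2 + 1)
  push_cast [ZMod.natCast_zmod_val] at hcast
  linear_combination hcast - hm

theorem exists_lt_add_eq_mul_of_le (ht : 0 < t) (v : ZMod (t ^ 2 + 1)) {Y : ℕ}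
    (hv : t ^ 2 + 1 + t ≤ v.val + t * Y) :
    ∃ x y, x < t ∧ y < Y ∧ x + (t ^ 2 + 1 - v.val) = t * y := by
  obtain ⟨x, y, hx, hxy⟩ := exists_lt_add_eq_mul ht (t ^ 2 + 1 - v.val)
  have hval := ZMod.val_lt v
  exact ⟨x, y, hx, Nat.lt_of_mul_lt_mul_left (a := t) (by omega), hxy⟩

theorem exists_add_mul_eq_add_mul {x y j : ℕ} (hx : x < t) (hy : y ≤ t) (hj : j ≤ t)
    (hy₀ : y = 0 → x + j ≤ t) (hyt : y = t → t ≤ x + j) :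
    ∃ x' y', x' ≤ t ∧ y' < t ∧ x' + t * y = x + j + t * y' ∧
      (x' + y' = x + y + j ∨ x' + y' + (t + 1) = x + y + j) := by
  by_cases h : x + j ≤ t ∧ y < t
  · exact ⟨x + j, y, h.1, h.2, by ring, Or.inl (by ring)⟩
  · obtain ⟨y', rfl⟩ : ∃ y', y = y' + 1 := ⟨y - 1, by omega⟩
    exact ⟨x + j - t, y', by omega, by omega, by rw [mul_add_one]; omega, Or.inr (by omega)⟩

theorem exists_natCast_sub_mul_eq (v : ZMod (t ^ 2 + 1)) {j : ℕ} (hj₀ : 0 < j) (hj : j ≤ t) :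
    ∃ x y, x < t ∧ y ≤ t ∧ (y = 0 → x + j ≤ t) ∧ (y = t → t ≤ x + j) ∧
      (x - t * y : ZMod (t ^ 2 + 1)) = v := by
  by_cases h : v.val + j ≤ t
  · exact ⟨v.val, 0, by omega, by omega, fun _ => h, fun h0 => by omega, by simp⟩
  have hsq := sq t
  have hval := ZMod.val_lt v
  obtain ⟨x, y, hx, hy, hxy⟩ :=
    exists_lt_add_eq_mul_of_le (by omega) v (Y := t + 1) (by rw [mul_add_one]; omega)
  refine ⟨x, y, hx, by omega, fun hy₀ => ?_, fun hyt => ?_, natCast_sub_mul_eq_of_add_eq hxy⟩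
  · rw [hy₀, mul_zero] at hxy
    omega
  · rw [hyt] at hxy
    omega

end FirstCoordinate

section SecondCoordinate

variable {n : ℕ}

theorem exists_lt_natCast_add_eq [NeZero n] (σ : ℕ) (w : ZMod n) :
    ∃ z < n, ((σ + z : ℕ) : ZMod n) = w :=
  ⟨(w - σ).val, ZMod.val_lt _, by push_cast [ZMod.natCast_zmod_val]; ring⟩

theorem exists_lt_pred_natCast_add_eq [NeZero n] {σ : ℕ} {w : ZMod n} (h : (σ : ZMod n) ≠ w + 1) :
    ∃ z < n - 1, ((σ + z : ℕ) : ZMod n) = w := by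
  refine ⟨(w - σ).val, ?_, by push_cast [ZMod.natCast_zmod_val]; ring⟩
  have hne : (w - σ).val ≠ n - 1 := fun he => h <| by
    have hcast := congrArg (Nat.cast : ℕ → ZMod n) he
    rw [ZMod.natCast_zmod_val, Nat.cast_pred (Nat.pos_of_neZero n), ZMod.natCast_self] at hcast
    linear_combination -hcast
  have := ZMod.val_lt (w - (σ : ZMod n))
  omega

theorem natCast_add_ne_self {σ k : ℕ} (hk : 0 < k) (hkn : k < n) :
    ((σ + k : ℕ) : ZMod n) ≠ σ := by
  intro h
  have hk0 : (k : ZMod n) = 0 := by push_cast at h; linear_combination h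
  rw [ZMod.natCast_eq_zero_iff] at hk0
  exact absurd (Nat.le_of_dvd hk hk0) (by omega)

end SecondCoordinate

/-- `s₁ < s₂` are the star positions of a `Q₂`-subface of `Q_{N-1}` and `x, y, z` count the
`ε`-bits set in its three blocks; `f s₁ + g s₂` and `w` are what the two colour coordinates must
equal once the contributions of the region counts are subtracted. -/
def SubfaceSolvable (t n N : ℕ) (f g : ℕ → ZMod (t ^ 2 + 1)) (w : ZMod n) : Prop :=
  ∃ s₁ s₂ x y z : ℕ, x < s₁ ∧ s₁ + y < s₂ ∧ s₂ + z < N ∧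
    (x - t * y : ZMod (t ^ 2 + 1)) = f s₁ + g s₂ ∧ ((x + y + z : ℕ) : ZMod n) = w

namespace SubfaceSolvable

variable {t n N : ℕ} {f g : ℕ → ZMod (t ^ 2 + 1)} {w : ZMod n}

theorem of_natCast_sub_mul_eq [NeZero n] {s₁ s₂ x y : ℕ} (hx : x < s₁) (hy : s₁ + y < s₂)
    (hs₂ : s₂ + n ≤ N) (h : (x - t * y : ZMod (t ^ 2 + 1)) = f s₁ + g s₂) :
    SubfaceSolvable t n N f g w := by
  obtain ⟨z, hz, hxyz⟩ := exists_lt_natCast_add_eq (x + y) w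
  exact ⟨s₁, s₂, x, y, z, hx, hy, by omega, h, hxyz⟩

theorem of_natCast_sub_mul_eq_of_ne [NeZero n] {s₁ s₂ x y : ℕ} (hx : x < s₁) (hy : s₁ + y < s₂)
    (hs₂ : s₂ + n ≤ N + 1) (h : (x - t * y : ZMod (t ^ 2 + 1)) = f s₁ + g s₂)
    (hxy : ((x + y : ℕ) : ZMod n) ≠ w + 1) :
    SubfaceSolvable t n N f g w := by
  obtain ⟨z, hz, hxyz⟩ := exists_lt_pred_natCast_add_eq hxy
  exact ⟨s₁, s₂, x, y, z, hx, hy, by omega, h, hxyz⟩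

theorem of_val [NeZero n] (ht : 0 < t) {s₁ s₂ : ℕ} (hs₁ : t ≤ s₁) (hs : s₁ < s₂)
    (hs₂ : s₂ + n ≤ N)
    (hv : (f s₁ + g s₂).val < s₁ ∨ t ^ 2 + 1 + t ≤ (f s₁ + g s₂).val + t * (s₂ - s₁)) :
    SubfaceSolvable t n N f g w := by
  rcases hv with hv | hv
  · exact of_natCast_sub_mul_eq (x := (f s₁ + g s₂).val) (y := 0) hv (by omega) hs₂ (by simp)
  · obtain ⟨x, y, hx, hy, hxy⟩ := exists_lt_add_eq_mul_of_le ht _ hv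
    exact of_natCast_sub_mul_eq (by omega) (by omega) hs₂ (natCast_sub_mul_eq_of_add_eq hxy)

theorem of_eq_add_natCast [NeZero n] (hn : t < n) {j : ℕ} (hj₀ : 0 < j) (hj : j ≤ t)
    (hf : f (t + 1) = f t + j) : SubfaceSolvable t n (2 * t + n) f g w := by
  obtain ⟨x, y, hx, hy, hy₀, hyt, hC⟩ := exists_natCast_sub_mul_eq (f t + g (2 * t + 1)) hj₀ hj
  obtain ⟨x', y', hx', hy', hxy, hsum⟩ := exists_add_mul_eq_add_mul hx hy hj hy₀ hyt
  have hA : (x' - t * y' : ZMod (t ^ 2 + 1)) = f (t + 1) + g (2 * t + 1) := by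
    have hcast := congrArg (Nat.cast : ℕ → ZMod (t ^ 2 + 1)) hxy
    push_cast at hcast
    rw [hf]
    linear_combination hcast + hC
  have hsums : ((x' + y' : ℕ) : ZMod n) ≠ (x + y : ℕ) := by
    rcases hsum with h | h
    · rw [h]
      exact natCast_add_ne_self hj₀ (by omega)
    · rw [show x + y = x' + y' + (t + 1 - j) by omega]
      exact (natCast_add_ne_self (by omega) (by omega)).symm
  by_cases hσ : ((x + y : ℕ) : ZMod n) = w + 1
  · exact of_natCast_sub_mul_eq_of_ne (s₁ := t + 1) (s₂ := 2 * t + 1) (by omega) (by omega)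
      (by omega) hA (hσ ▸ hsums)
  · exact of_natCast_sub_mul_eq_of_ne (s₁ := t) (s₂ := 2 * t + 1) hx (by omega) (by omega) hC hσ

end SubfaceSolvable

theorem subfaceSolvable {t n : ℕ} (ht : 2 ≤ t) (hn : t < n) (f g : ℕ → ZMod (t ^ 2 + 1))
    (w : ZMod n) : SubfaceSolvable t n (2 * t + n) f g w := by
  have : NeZero n := ⟨by omega⟩
  have hsq := sq t
  by_cases hD : (f t + g (2 * t)).val = t
  swap
  · refine .of_val (s₁ := t) (s₂ := 2 * t) (by omega) le_rfl (by omega) le_rfl ?_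
    rw [show 2 * t - t = t by omega]
    omega
  by_cases hB : (f (t + 1) + g (2 * t)).val ≤ t ∨ 2 * t + 1 ≤ (f (t + 1) + g (2 * t)).val
  · refine .of_val (s₁ := t + 1) (s₂ := 2 * t) (by omega) (by omega) (by omega) le_rfl ?_
    rw [show 2 * t - (t + 1) = t - 1 by omega, Nat.mul_sub_one]
    have := Nat.le_mul_self t
    omega
  obtain ⟨j, hj⟩ : ∃ j, (f (t + 1) + g (2 * t)).val = t + j :=
    ⟨_, (Nat.add_sub_of_le (by omega)).symm⟩
  refine .of_eq_add_natCast hn (j := j) (by omega) (by omega) ?_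
  have hvD := ZMod.natCast_zmod_val (f t + g (2 * t))
  have hvB := ZMod.natCast_zmod_val (f (t + 1) + g (2 * t))
  rw [hD] at hvD
  rw [hj, Nat.cast_add] at hvB
  linear_combination hvD - hvB

theorem statement4 (t n : ℕ) (ht : 2 ≤ t) (hn : t < n) :
    Function.Surjective
      (fun v : Fin 3 → ℕ =>
        ((v 0 - t * v 1, v 0 + v 1 + v 2) : ZMod (t ^ 2 + 1) × ZMod n)) ∧
    PolyColoring 2 (2 * t + n - 1)
      (fun v : Fin 3 → ℕ =>
        ((v 0 - t * v 1, v 0 + v 1 + v 2) : ZMod (t ^ 2 + 1) × ZMod n)) := by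
  have : NeZero n := ⟨by omega⟩
  refine ⟨fun ⟨c₁, c₂⟩ => ⟨![c₁.val, 0, (c₂ - c₁.val).val], by simp⟩,
    polyColoring_two_of_exists fun a c => ?_⟩
  obtain ⟨s₁, s₂, x, y, z, hx, hy, hz, h₁, h₂⟩ := subfaceSolvable ht hn
    (fun s => c.1 - (1 + t) * ((∑ i ∈ range s, a i : ℕ) : ZMod (t ^ 2 + 1)))
    (fun s => t * ((∑ i ∈ range s, a i : ℕ) : ZMod (t ^ 2 + 1)))
    (c.2 - ((∑ i ∈ range (2 * t + n), a i : ℕ) : ZMod n))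
  refine ⟨s₁, s₂, x, y, z, hx, hy, by omega, ?_⟩
  rw [Nat.sub_add_cancel (by omega)]
  have e₁ := sum_range_add_sum_Ico a (show s₁ ≤ s₂ by omega)
  have e₂ := sum_range_add_sum_Ico a (show s₂ ≤ 2 * t + n by omega)
  ext
  · have e₁' := congrArg (Nat.cast : ℕ → ZMod (t ^ 2 + 1)) e₁
    push_cast at e₁' h₁ ⊢
    linear_combination h₁ - t * e₁'
  · have e₁' := congrArg (Nat.cast : ℕ → ZMod n) e₁
    have e₂' := congrArg (Nat.cast : ℕ → ZMod n) e₂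
    push_cast at e₁' e₂' h₂ ⊢
    linear_combination h₂ + e₁' + e₂'
end

section
/- Let t ≥ 2 and n > t be integers and set m = t²+1. Then for every integer h and every integer δ with 1 ≤ δ ≤ t, there exist integers u₁, v₁, u₂, v₂ with 0 ≤ u₁ ≤ t−1, 0 ≤ v₁ ≤ t, 0 ≤ u₂ ≤ t, 0 ≤ v₂ ≤ t−1, such that u₁ − t·v₁ ≡ h (mod m), u₂ − t·v₂ ≡ h + δ (mod m), and u₁ + v₁ ≢ u₂ + v₂ (mod n). -/
/-!
Modulo `m = t² + 1` the numbers `u - t v` with `0 ≤ u ≤ t`, `0 ≤ v ≤ t - 1` hit every residue,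
so `h + δ` has such a representation `(u₂, v₂)`. Subtracting `δ` from `u₂` (and, when `u₂ < δ`,
adding `t` to `u` and `1` to `v`) represents `h` by a pair `(u₁, v₁)` whose coordinate sum differs
by `δ` or by `t + 1 - δ`; both lie in `[1, t]`, and `t < n`.
-/

namespace Int

theorem exists_sub_mul_modEq_sq_add_one {t : ℤ} (ht : 0 < t) (a : ℤ) :
    ∃ u v : ℤ, 0 ≤ u ∧ u ≤ t ∧ 0 ≤ v ∧ v ≤ t - 1 ∧ u - t * v ≡ a [ZMOD t ^ 2 + 1] := by
  have hm : 0 < t ^ 2 + 1 := by positivity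
  set r := a % (t ^ 2 + 1)
  have hr0 : 0 ≤ r := emod_nonneg _ hm.ne'
  have hrm : r < t ^ 2 + 1 := emod_lt_of_pos _ hm
  have hra : r ≡ a [ZMOD t ^ 2 + 1] := mod_modEq _ _
  by_cases hrt : r ≤ t
  · exact ⟨r, 0, hr0, hrt, le_rfl, by linarith, by simpa using hra⟩
  -- Otherwise `r - 1 = t q + s` with `1 ≤ q ≤ t - 1`, and `s - t (t - q) = r - (t² + 1)`.
  have hdiv := emod_add_mul_ediv (r - 1) t
  set s := (r - 1) % t
  set q := (r - 1) / t
  have hs0 : 0 ≤ s := emod_nonneg _ ht.ne'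
  have hst : s < t := emod_lt_of_pos _ ht
  have hq1 : 1 ≤ q := by nlinarith
  have hqt : q ≤ t - 1 := by nlinarith
  refine ⟨s, t - q, hs0, hst.le, by linarith, by linarith, ?_⟩
  have hsr : s - t * (t - q) = r - (t ^ 2 + 1) := by linear_combination hdiv
  rw [hsr]
  exact (modEq_iff_dvd.mpr ⟨1, by ring⟩).trans hra

theorem exists_sub_mul_eq_sub_mul_sub {t δ u₂ v₂ : ℤ} (hδ1 : 1 ≤ δ) (hδt : δ ≤ t)
    (hu₂0 : 0 ≤ u₂) (hu₂t : u₂ ≤ t) (hv₂0 : 0 ≤ v₂) (hv₂t : v₂ ≤ t - 1) :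
    ∃ u₁ v₁ : ℤ, 0 ≤ u₁ ∧ u₁ ≤ t - 1 ∧ 0 ≤ v₁ ∧ v₁ ≤ t ∧
      u₁ - t * v₁ = u₂ - t * v₂ - δ ∧
      u₁ + v₁ ≠ u₂ + v₂ ∧ |u₁ + v₁ - (u₂ + v₂)| ≤ t := by
  by_cases hδu : δ ≤ u₂
  · exact ⟨u₂ - δ, v₂, by linarith, by linarith, hv₂0, by linarith, by ring,
      by linarith, abs_le.mpr ⟨by linarith, by linarith⟩⟩
  · exact ⟨u₂ - δ + t, v₂ + 1, by linarith, by linarith, by linarith, by linarith, by ring,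
      by linarith, abs_le.mpr ⟨by linarith, by linarith⟩⟩

end Int

theorem statement6 (t n : ℤ) (ht : 2 ≤ t) (hn : t < n) (h δ : ℤ)
    (hδ1 : 1 ≤ δ) (hδt : δ ≤ t) :
    ∃ u₁ v₁ u₂ v₂ : ℤ,
      0 ≤ u₁ ∧ u₁ ≤ t - 1 ∧ 0 ≤ v₁ ∧ v₁ ≤ t ∧
      0 ≤ u₂ ∧ u₂ ≤ t ∧ 0 ≤ v₂ ∧ v₂ ≤ t - 1 ∧
      u₁ - t * v₁ ≡ h [ZMOD (t ^ 2 + 1)] ∧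
      u₂ - t * v₂ ≡ h + δ [ZMOD (t ^ 2 + 1)] ∧
      ¬(u₁ + v₁ ≡ u₂ + v₂ [ZMOD n]) := by
  obtain ⟨u₂, v₂, hu₂0, hu₂t, hv₂0, hv₂t, hu₂v₂⟩ :=
    Int.exists_sub_mul_modEq_sq_add_one (t := t) (by linarith) (h + δ)
  obtain ⟨u₁, v₁, hu₁0, hu₁t, hv₁0, hv₁t, hu₁v₁, hne, hle⟩ :=
    Int.exists_sub_mul_eq_sub_mul_sub hδ1 hδt hu₂0 hu₂t hv₂0 hv₂t
  refine ⟨u₁, v₁, u₂, v₂, hu₁0, hu₁t, hv₁0, hv₁t, hu₂0, hu₂t, hv₂0, hv₂t, ?_, hu₂v₂, ?_⟩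
  · rw [hu₁v₁]
    simpa using hu₂v₂.sub_right δ
  · intro hmod
    have := Int.eq_zero_of_abs_lt_dvd hmod.symm.dvd (by linarith)
    exact hne (by linarith)
end

section
/- Let t ≥ 2 be an integer and set m = t²+1. Then the set of residues { (u − t·v) mod m : u, v ∈ ℤ, 0 ≤ u ≤ t−1, 0 ≤ v ≤ t−1 } is exactly the complement in ZMod m of the single residue t mod m; that is, it consists of all residues of ZMod m except t. -/
/-!
The integers `u - t * v` with base-`t` digits `u, v` are exactly the `t²` consecutive integers
strictly between `t - (t² + 1)` and `t`, since `t - 1 - (u - t * v) = t * v + (t - 1 - u)` runs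
through `[0, t²)`. Any `m - 1` consecutive integers reduce modulo `m` onto all residues but one,
here the residue of `t`.
-/

theorem Int.setOf_sub_mul_eq_Ioo {t : ℤ} (ht : 0 ≤ t) :
    {k : ℤ | ∃ u v : ℤ, 0 ≤ u ∧ u ≤ t - 1 ∧ 0 ≤ v ∧ v ≤ t - 1 ∧ k = u - t * v} =
      Set.Ioo (t - (t ^ 2 + 1)) t := by
  ext k
  simp only [Set.mem_ofPred_eq, Set.mem_Ioo]
  constructor
  · rintro ⟨u, v, hu0, hut, hv0, hvt, rfl⟩
    constructor <;> nlinarith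
  · rintro ⟨hlo, hhi⟩
    obtain rfl | ht := ht.eq_or_lt
    · omega
    set j := t - 1 - k
    have hj : j < t * t := by nlinarith
    refine ⟨t - 1 - j % t, j / t, ?_, ?_, ?_, ?_, ?_⟩
    · linarith [Int.emod_lt_of_pos j ht]
    · linarith [Int.emod_nonneg j ht.ne']
    · exact Int.ediv_nonneg (by omega) ht.le
    · linarith [(Int.ediv_lt_iff_lt_mul ht).2 hj]
    · linarith [Int.mul_ediv_add_emod j t]

theorem ZMod.intCast_image_Ioo_sub (n : ℕ) [NeZero n] (b : ℤ) :
    Int.cast '' Set.Ioo (b - n) b = ({(b : ZMod n)}ᶜ : Set (ZMod n)) := by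
  ext x
  simp only [Set.mem_image, Set.mem_Ioo, Set.mem_compl_iff, Set.mem_singleton_iff]
  constructor
  · rintro ⟨k, ⟨hlo, hhi⟩, rfl⟩ h
    have hdvd : (n : ℤ) ∣ b - k := (ZMod.intCast_eq_intCast_iff_dvd_sub k b n).1 h
    have := Int.le_of_dvd (by omega) hdvd
    omega
  · intro hx
    set r := (x - b).val
    have hr0 : r ≠ 0 := by
      rw [Ne, ZMod.val_eq_zero, sub_eq_zero]
      exact hx
    refine ⟨b - n + r, ⟨by omega, by linarith [(x - b).val_lt]⟩, ?_⟩
    have : ((r : ℤ) : ZMod n) = x - b := by simp [r]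
    push_cast at this ⊢
    rw [this, ZMod.natCast_self]
    ring

theorem statement7_general (t : ℕ) :
    {x : ZMod (t ^ 2 + 1) | ∃ u v : ℤ,
        0 ≤ u ∧ u ≤ (t : ℤ) - 1 ∧ 0 ≤ v ∧ v ≤ (t : ℤ) - 1 ∧
        x = ((u - t * v : ℤ) : ZMod (t ^ 2 + 1))} =
      {(t : ZMod (t ^ 2 + 1))}ᶜ := by
  have h := ZMod.intCast_image_Ioo_sub (t ^ 2 + 1) t
  push_cast at h
  rw [← h, ← Int.setOf_sub_mul_eq_Ioo (by positivity)]
  ext x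
  simp only [Set.mem_image, Set.mem_ofPred_eq]
  constructor
  · rintro ⟨u, v, hu0, hut, hv0, hvt, rfl⟩
    exact ⟨_, ⟨u, v, hu0, hut, hv0, hvt, rfl⟩, rfl⟩
  · rintro ⟨_, ⟨u, v, hu0, hut, hv0, hvt, rfl⟩, rfl⟩
    exact ⟨u, v, hu0, hut, hv0, hvt, rfl⟩

theorem statement7 (t : ℕ) (ht : 2 ≤ t) :
    {x : ZMod (t ^ 2 + 1) | ∃ u v : ℤ,
        0 ≤ u ∧ u ≤ (t : ℤ) - 1 ∧ 0 ≤ v ∧ v ≤ (t : ℤ) - 1 ∧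
        x = ((u - t * v : ℤ) : ZMod (t ^ 2 + 1))} =
      {(t : ZMod (t ^ 2 + 1))}ᶜ :=
  statement7_general t
end

section
/- Let t ≥ 2 be an integer and set m = t²+1. Then the set of residues { (u − t·v) mod m : u, v ∈ ℤ, 0 ≤ u ≤ t, 0 ≤ v ≤ t−2 } is exactly the complement in ZMod m of the set { (t+1) mod m, (t+2) mod m, ..., (2t) mod m }; that is, it consists of all residues of ZMod m except the t residues t+1, t+2, ..., 2t. -/
/-!
With `m = t² + 1`, the integers `u - t v` (`0 ≤ u ≤ t`, `0 ≤ v ≤ t - 2`) fill exactly the interval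
`[-t(t-2), t]`: write a negative integer as `t q + r` with `0 ≤ r < t`. Shifted by `m` this becomes
`[2t + 1, t + m]`, which together with the block `[t + 1, 2t]` partitions the window `[t + 1, t + m]`
of `m` consecutive integers, a complete system of residues modulo `m`.
-/

namespace Int

theorem exists_sub_mul_eq_iff_mem_Icc {t k n : ℤ} (ht : 0 < t) (hk : 0 ≤ k) :
    (∃ u v : ℤ, 0 ≤ u ∧ u ≤ t ∧ 0 ≤ v ∧ v ≤ k ∧ n = u - t * v) ↔ n ∈ Set.Icc (-(t * k)) t := by
  constructor
  · rintro ⟨u, v, hu₀, hut, hv₀, hvk, rfl⟩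
    constructor <;> nlinarith
  · rintro ⟨hlo, hhi⟩
    rcases le_or_gt 0 n with hn | hn
    · exact ⟨n, 0, hn, hhi, le_rfl, hk, by ring⟩
    · refine ⟨n % t, -(n / t), emod_nonneg n ht.ne', (emod_lt_of_pos n ht).le, ?_, ?_, ?_⟩
      · simpa using ediv_neg_of_neg_of_pos hn ht |>.le
      · rw [neg_le, Int.le_ediv_iff_mul_le ht]; linarith
      · linarith [emod_add_mul_ediv n t]

end Int

namespace ZMod

theorem intCast_injOn_Ico (m : ℕ) (a : ℤ) :
    Set.InjOn (Int.cast : ℤ → ZMod m) (Set.Ico a (a + m)) := by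
  intro i ⟨hia, him⟩ j ⟨hja, hjm⟩ hij
  have hdvd : (m : ℤ) ∣ j - i := (intCast_eq_intCast_iff_dvd_sub i j m).mp hij
  have habs : |j - i| < m := abs_sub_lt_iff.mpr ⟨by linarith, by linarith⟩
  linarith [Int.eq_zero_of_abs_lt_dvd hdvd habs]

theorem exists_intCast_eq_of_mem_Ico {m : ℕ} [NeZero m] (a : ℤ) (x : ZMod m) :
    ∃ n ∈ Set.Ico a (a + m), (n : ZMod m) = x := by
  have hm : (0 : ℤ) < m := by exact_mod_cast NeZero.pos m
  refine ⟨a + ((x.cast : ℤ) - a) % m, ⟨?_, ?_⟩, ?_⟩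
  · linarith [Int.emod_nonneg ((x.cast : ℤ) - a) hm.ne']
  · linarith [Int.emod_lt_of_pos ((x.cast : ℤ) - a) hm]
  · rw [Int.cast_add, intCast_mod, Int.cast_sub, add_sub_cancel, intCast_zmod_cast]

end ZMod

section

variable {t : ℕ} {n : ℤ}

theorem exists_intCast_sub_mul_eq_iff (ht : 2 ≤ t)
    (hn : n ∈ Set.Ico ((t : ℤ) + 1) (t + 1 + (t ^ 2 + 1 : ℕ))) :
    (∃ u v : ℤ, 0 ≤ u ∧ u ≤ (t : ℤ) ∧ 0 ≤ v ∧ v ≤ (t : ℤ) - 2 ∧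
      (n : ZMod (t ^ 2 + 1)) = ((u - t * v : ℤ) : ZMod (t ^ 2 + 1))) ↔ 2 * t < n := by
  have hshift (i : ℤ) : ((i + (t ^ 2 + 1 : ℕ) : ℤ) : ZMod (t ^ 2 + 1)) = i := by
    rw [Int.cast_add, Int.cast_natCast, ZMod.natCast_self, add_zero]
  obtain ⟨hn₁, hn₂⟩ := hn
  push_cast at hn₂
  constructor
  · rintro ⟨u, v, hu₀, hut, hv₀, hvt, hnuv⟩
    obtain ⟨hlo, hhi⟩ := (Int.exists_sub_mul_eq_iff_mem_Icc (by omega) (by omega)).mp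
      ⟨u, v, hu₀, hut, hv₀, hvt, rfl⟩
    have := ZMod.intCast_injOn_Ico (t ^ 2 + 1) (t + 1) ⟨hn₁, by push_cast; linarith⟩
      (by push_cast; constructor <;> linarith) (hnuv.trans (hshift _).symm)
    push_cast at this
    linarith
  · intro hn
    obtain ⟨u, v, hu₀, hut, hv₀, hvt, huv⟩ :=
      (Int.exists_sub_mul_eq_iff_mem_Icc (t := t) (k := t - 2) (by omega) (by omega)).mpr
        (show n - (t ^ 2 + 1 : ℕ) ∈ _ by push_cast; constructor <;> linarith)
    exact ⟨u, v, hu₀, hut, hv₀, hvt, by rw [← huv, ← hshift (n - _), sub_add_cancel]⟩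

theorem exists_intCast_eq_block_iff (hn : n ∈ Set.Ico ((t : ℤ) + 1) (t + 1 + (t ^ 2 + 1 : ℕ))) :
    (∃ j : ℤ, (t : ℤ) + 1 ≤ j ∧ j ≤ 2 * t ∧
      (n : ZMod (t ^ 2 + 1)) = ((j : ℤ) : ZMod (t ^ 2 + 1))) ↔ n ≤ 2 * t := by
  constructor
  · rintro ⟨j, hj₁, hj₂, hnj⟩
    rwa [ZMod.intCast_injOn_Ico _ _ hn ⟨hj₁, by push_cast; nlinarith⟩ hnj]
  · exact fun hn' => ⟨n, hn.1, hn', rfl⟩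

end

theorem statement8 (t : ℕ) (ht : 2 ≤ t) :
    {x : ZMod (t ^ 2 + 1) | ∃ u v : ℤ,
        0 ≤ u ∧ u ≤ (t : ℤ) ∧ 0 ≤ v ∧ v ≤ (t : ℤ) - 2 ∧
        x = ((u - t * v : ℤ) : ZMod (t ^ 2 + 1))} =
      {x : ZMod (t ^ 2 + 1) | ∃ j : ℤ,
        (t : ℤ) + 1 ≤ j ∧ j ≤ 2 * t ∧ x = ((j : ℤ) : ZMod (t ^ 2 + 1))}ᶜ := by
  ext x
  obtain ⟨n, hn, rfl⟩ := ZMod.exists_intCast_eq_of_mem_Ico ((t : ℤ) + 1) x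
  simp only [Set.mem_ofPred_eq, Set.mem_compl_iff, exists_intCast_sub_mul_eq_iff ht hn,
    exists_intCast_eq_block_iff hn, not_le]
end

section
/- Let t ≥ 2 be an integer and set m = t²+1. Then both of the following sets equal all of ZMod m: (i) { (u − t·v) mod m : u, v ∈ ℤ, 0 ≤ u ≤ t−1, 0 ≤ v ≤ t }, and (ii) { (u − t·v) mod m : u, v ∈ ℤ, 0 ≤ u ≤ t, 0 ≤ v ≤ t−1 }. -/
/-!
Modulo `m = t² + 1` we have `t · t = -1`, so `u - t v = -t (t u + v)` and multiplication by `-t`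
is a bijection of `ZMod m` (with inverse multiplication by `t`). It therefore suffices that the
numbers `t u + v` with `(u, v)` in either box cover `0, …, t²`, which is division with remainder
by `t`; only `t²` itself needs the extra pair `(t - 1, t)` in the first box.
-/

namespace ZMod

theorem natCast_mul_self_eq_neg_one (t : ℕ) : (t : ZMod (t ^ 2 + 1)) * t = -1 := by
  have h : ((t ^ 2 + 1 : ℕ) : ZMod (t ^ 2 + 1)) = 0 := natCast_self _
  push_cast at h
  linear_combination h

theorem intCast_sub_mul_eq_neg_mul (t : ℕ) (u v : ℤ) :
    ((u - t * v : ℤ) : ZMod (t ^ 2 + 1)) = -t * ((t * u + v : ℤ) : ZMod (t ^ 2 + 1)) := by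
  push_cast
  linear_combination (u : ZMod (t ^ 2 + 1)) * natCast_mul_self_eq_neg_one t

theorem exists_intCast_sub_mul_eq (t : ℕ) (P : ℤ → ℤ → Prop)
    (h : ∀ n : ℤ, 0 ≤ n → n ≤ t ^ 2 → ∃ u v, P u v ∧ n = t * u + v) (x : ZMod (t ^ 2 + 1)) :
    ∃ u v, P u v ∧ x = ((u - t * v : ℤ) : ZMod (t ^ 2 + 1)) := by
  set n := ((t : ZMod (t ^ 2 + 1)) * x).val
  have hn : n ≤ t ^ 2 := Nat.lt_succ_iff.mp (val_lt _)
  obtain ⟨u, v, huv, hn_eq⟩ := h n (Int.natCast_nonneg n) (by exact_mod_cast hn)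
  refine ⟨u, v, huv, ?_⟩
  rw [intCast_sub_mul_eq_neg_mul, ← hn_eq, Int.cast_natCast, natCast_val, cast_id', id,
    ← mul_assoc, neg_mul, natCast_mul_self_eq_neg_one, neg_neg, one_mul]

end ZMod

theorem Int.exists_eq_mul_add_of_lt_mul {t n k : ℤ} (ht : 0 < t) (hn : 0 ≤ n)
    (hnk : n < t * (k + 1)) :
    ∃ u v, (0 ≤ u ∧ u ≤ k ∧ 0 ≤ v ∧ v ≤ t - 1) ∧ n = t * u + v := by
  have hdiv := Int.mul_ediv_add_emod n t
  have hv := Int.emod_lt_of_pos n ht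
  have hv₀ := Int.emod_nonneg n ht.ne'
  have hu : n / t < k + 1 := by nlinarith
  exact ⟨n / t, n % t, ⟨Int.ediv_nonneg hn ht.le, by omega, hv₀, by omega⟩, hdiv.symm⟩

theorem Int.exists_eq_mul_add_of_le_sq {t n : ℤ} (ht : 0 < t) (hn₀ : 0 ≤ n) (hn : n ≤ t ^ 2) :
    ∃ u v, (0 ≤ u ∧ u ≤ t - 1 ∧ 0 ≤ v ∧ v ≤ t) ∧ n = t * u + v := by
  rcases hn.lt_or_eq with hlt | rfl
  · obtain ⟨u, v, ⟨hu₀, hu, hv₀, hv⟩, rfl⟩ :=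
      Int.exists_eq_mul_add_of_lt_mul (k := t - 1) ht hn₀ (by linarith)
    exact ⟨u, v, ⟨hu₀, hu, hv₀, by omega⟩, rfl⟩
  · exact ⟨t - 1, t, ⟨by omega, le_rfl, ht.le, le_rfl⟩, by ring⟩

theorem statement9 (t : ℕ) (ht : 2 ≤ t) :
    {x : ZMod (t ^ 2 + 1) | ∃ u v : ℤ,
        0 ≤ u ∧ u ≤ (t : ℤ) - 1 ∧ 0 ≤ v ∧ v ≤ (t : ℤ) ∧
        x = ((u - t * v : ℤ) : ZMod (t ^ 2 + 1))} = Set.univ ∧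
    {x : ZMod (t ^ 2 + 1) | ∃ u v : ℤ,
        0 ≤ u ∧ u ≤ (t : ℤ) ∧ 0 ≤ v ∧ v ≤ (t : ℤ) - 1 ∧
        x = ((u - t * v : ℤ) : ZMod (t ^ 2 + 1))} = Set.univ := by
  have ht₀ : (0 : ℤ) < t := by omega
  constructor <;> refine Set.eq_univ_of_forall fun x => ?_
  · obtain ⟨u, v, ⟨hu₀, hu, hv₀, hv⟩, hx⟩ := ZMod.exists_intCast_sub_mul_eq t _
      (fun n hn₀ hn => Int.exists_eq_mul_add_of_le_sq ht₀ hn₀ hn) x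
    exact ⟨u, v, hu₀, hu, hv₀, hv, hx⟩
  · obtain ⟨u, v, ⟨hu₀, hu, hv₀, hv⟩, hx⟩ := ZMod.exists_intCast_sub_mul_eq t _
      (fun n hn₀ hn => Int.exists_eq_mul_add_of_lt_mul ht₀ hn₀ (by linarith)) x
    exact ⟨u, v, hu₀, hu, hv₀, hv, hx⟩
end

section
/- Let ℓ₀, ℓ₁ ≥ 0 and d₀ ≥ ℓ₀, d₁ ≥ ℓ₁. Suppose χ₀ : ℕ^{ℓ₀+1} → C₀ is a d₀-polychromatic simple Q_{ℓ₀}-coloring and χ₁ : ℕ^{ℓ₁+1} → C₁ is a d₁-polychromatic simple Q_{ℓ₁}-coloring. Then the coloring χ : ℕ^{ℓ₀+ℓ₁+2} → C₀ × C₁ defined by applying χ₀ to the first ℓ₀+1 coordinates and χ₁ to the last ℓ₁+1 coordinates is a (d₀+d₁+1)-polychromatic simple Q_{ℓ₀+ℓ₁+1}-coloring. -/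
/-!
Split an embedded `Q_{d₀+d₁+1}` at its star `d₀ + 1`: the regions before it form a `Q_{d₀}`,
those after it a `Q_{d₁}`. Take a subface of the first of color `c₀` and one of the second of
color `c₁`, and glue them into a subface of the whole cube that also selects the star `d₀ + 1`.
Its first `ℓ₀ + 1` coordinates are those of the first subface and its last `ℓ₁ + 1` those of the
second, so it has color `(c₀, c₁)`.
-/

open Finset

structure IsSubface (ℓ d : ℕ) (s ε : ℕ → ℕ) : Prop where
  zero : s 0 = 0
  last : s (ℓ + 1) = d + 1
  lt_succ : ∀ j, j ≤ ℓ → s j < s (j + 1)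
  bit_le_one : ∀ k, ε k ≤ 1

/-- The paper's `p_j`. -/
def subfaceCoord (a s ε : ℕ → ℕ) (j : ℕ) : ℕ :=
  (∑ i ∈ Ico (s j) (s (j + 1)), a i) + ∑ k ∈ Ioo (s j) (s (j + 1)), ε k

theorem polyColoring_iff {ℓ d : ℕ} {C : Type*} (χ : (Fin (ℓ + 1) → ℕ) → C) :
    PolyColoring ℓ d χ ↔
      ∀ a c, ∃ s ε, IsSubface ℓ d s ε ∧ χ (fun j => subfaceCoord a s ε j) = c := by
  refine forall₂_congr fun a c => exists₂_congr fun s ε => ?_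
  exact ⟨fun ⟨h0, hl, hs, hε, hc⟩ => ⟨⟨h0, hl, hs, hε⟩, hc⟩,
    fun ⟨⟨h0, hl, hs, hε⟩, hc⟩ => ⟨h0, hl, hs, hε, hc⟩⟩

theorem IsSubface.le_last {ℓ d : ℕ} {s ε : ℕ → ℕ} (h : IsSubface ℓ d s ε) {j : ℕ}
    (hj : j ≤ ℓ + 1) : s j ≤ d + 1 := by
  have hmono : StrictMonoOn s (Set.Iic (ℓ + 1)) :=
    strictMonoOn_Iic_of_lt_succ fun m hm => h.lt_succ m (by omega)
  exact h.last ▸ hmono.monotoneOn hj (Set.mem_Iic.mpr le_rfl) hj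

def splice {α : Type*} (n : ℕ) (f g : ℕ → α) (j : ℕ) : α :=
  if j ≤ n then f j else g (j - (n + 1))

theorem splice_of_le {α : Type*} {n j : ℕ} (f g : ℕ → α) (hj : j ≤ n) : splice n f g j = f j :=
  if_pos hj

theorem splice_add {α : Type*} {n : ℕ} (f g : ℕ → α) (j : ℕ) : splice n f g (n + 1 + j) = g j := by
  rw [splice, if_neg (by omega), Nat.add_sub_cancel_left]

theorem splice_succ {α : Type*} {n : ℕ} (f g : ℕ → α) : splice n f g (n + 1) = g 0 :=
  splice_add f g 0

section Glue

variable {ℓ₀ ℓ₁ d₀ d₁ : ℕ} {s₀ ε₀ s₁ ε₁ : ℕ → ℕ}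

def glueStars (ℓ₀ d₀ : ℕ) (s₀ s₁ : ℕ → ℕ) : ℕ → ℕ :=
  splice ℓ₀ s₀ fun j => d₀ + 1 + s₁ j

theorem IsSubface.glue (h₀ : IsSubface ℓ₀ d₀ s₀ ε₀) (h₁ : IsSubface ℓ₁ d₁ s₁ ε₁) :
    IsSubface (ℓ₀ + ℓ₁ + 1) (d₀ + d₁ + 1) (glueStars ℓ₀ d₀ s₀ s₁) (splice d₀ ε₀ ε₁) where
  zero := by rw [glueStars, splice_of_le _ _ (Nat.zero_le _), h₀.zero]
  last := by
    rw [glueStars, show ℓ₀ + ℓ₁ + 1 + 1 = ℓ₀ + 1 + (ℓ₁ + 1) by omega, splice_add, h₁.last]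
    omega
  lt_succ j hj := by
    unfold glueStars
    rcases lt_trichotomy j ℓ₀ with hj₀ | rfl | hj₀
    · rw [splice_of_le _ _ hj₀.le, splice_of_le _ _ hj₀]
      exact h₀.lt_succ j hj₀.le
    · rw [splice_of_le _ _ le_rfl, splice_succ, h₁.zero, add_zero, ← h₀.last]
      exact h₀.lt_succ j le_rfl
    · obtain ⟨i, rfl⟩ : ∃ i, j = ℓ₀ + 1 + i := ⟨j - (ℓ₀ + 1), by omega⟩
      rw [splice_add, show ℓ₀ + 1 + i + 1 = ℓ₀ + 1 + (i + 1) by ring, splice_add]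
      exact Nat.add_lt_add_left (h₁.lt_succ i (by omega)) _
  bit_le_one k := by
    unfold splice
    split_ifs
    exacts [h₀.bit_le_one k, h₁.bit_le_one _]

theorem subfaceCoord_glue_of_le (h₀ : IsSubface ℓ₀ d₀ s₀ ε₀) (h₁ : IsSubface ℓ₁ d₁ s₁ ε₁)
    (a : ℕ → ℕ) {j : ℕ} (hj : j ≤ ℓ₀) :
    subfaceCoord a (glueStars ℓ₀ d₀ s₀ s₁) (splice d₀ ε₀ ε₁) j = subfaceCoord a s₀ ε₀ j := by
  have hnext : glueStars ℓ₀ d₀ s₀ s₁ (j + 1) = s₀ (j + 1) := by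
    rcases hj.lt_or_eq with hj | rfl
    · exact splice_of_le _ _ hj
    · rw [glueStars, splice_succ, h₁.zero, add_zero, h₀.last]
  have hbits : ∀ k ∈ Ioo (s₀ j) (s₀ (j + 1)), splice d₀ ε₀ ε₁ k = ε₀ k := fun k hk =>
    splice_of_le _ _ <| by
      have := h₀.le_last (j := j + 1) (by omega)
      have := (mem_Ioo.mp hk).2
      omega
  rw [subfaceCoord, subfaceCoord, hnext, glueStars, splice_of_le _ _ hj, sum_congr rfl hbits]

theorem subfaceCoord_glue_add (a : ℕ → ℕ) (j : ℕ) :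
    subfaceCoord a (glueStars ℓ₀ d₀ s₀ s₁) (splice d₀ ε₀ ε₁) (ℓ₀ + 1 + j) =
      subfaceCoord (fun i => a (d₀ + 1 + i)) s₁ ε₁ j := by
  rw [subfaceCoord, subfaceCoord, glueStars, show ℓ₀ + 1 + j + 1 = ℓ₀ + 1 + (j + 1) by ring,
    splice_add, splice_add, ← map_add_left_Ico, sum_map, ← map_add_left_Ioo, sum_map]
  simp only [addLeftEmbedding_apply, splice_add]

end Glue

/-- Combining a `d₀`-polychromatic simple `Q_{ℓ₀}`-coloring on the first `ℓ₀ + 1`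
coordinates with a `d₁`-polychromatic simple `Q_{ℓ₁}`-coloring on the last `ℓ₁ + 1`
coordinates yields a `(d₀ + d₁ + 1)`-polychromatic simple `Q_{ℓ₀ + ℓ₁ + 1}`-coloring. -/
theorem statement12 (ℓ₀ ℓ₁ d₀ d₁ : ℕ)
    {C₀ C₁ : Type*} (χ₀ : (Fin (ℓ₀ + 1) → ℕ) → C₀) (χ₁ : (Fin (ℓ₁ + 1) → ℕ) → C₁)
    (hχ₀ : PolyColoring ℓ₀ d₀ χ₀) (hχ₁ : PolyColoring ℓ₁ d₁ χ₁) :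
    PolyColoring (ℓ₀ + ℓ₁ + 1) (d₀ + d₁ + 1)
      (fun v : Fin (ℓ₀ + ℓ₁ + 1 + 1) → ℕ =>
        (χ₀ (fun j => v ⟨j.1, by have := j.2; omega⟩),
         χ₁ (fun j => v ⟨ℓ₀ + 1 + j.1, by have := j.2; omega⟩))) := by
  rw [polyColoring_iff] at hχ₀ hχ₁ ⊢
  intro a c
  obtain ⟨s₀, ε₀, hs₀, hc₀⟩ := hχ₀ a c.1
  obtain ⟨s₁, ε₁, hs₁, hc₁⟩ := hχ₁ (fun i => a (d₀ + 1 + i)) c.2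
  refine ⟨_, _, hs₀.glue hs₁, Prod.ext ?_ ?_⟩
  · rw [← hc₀]
    exact congrArg χ₀ <| funext fun j =>
      subfaceCoord_glue_of_le hs₀ hs₁ a (Nat.lt_succ_iff.mp j.2)
  · rw [← hc₁]
    exact congrArg χ₁ <| funext fun j => subfaceCoord_glue_add a j
end
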